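/- Let I, J be finite sets with |I| = n ≥ 1, |J| = m ≥ 1, w : I × J → ℝ≥0, and OPT the maximum matching weight. If I_{t+1} is a uniformly random subset of I of size t+1, J_s is an independently chosen uniformly random subset of J of size s, and i is a uniformly random element of I_{t+1}, then the expected weight contributed by i in a fixed maximum-weight matching of (I_{t+1}, J_s) is at least (1/n)·(s/m)·OPT. -/

import Mathlib

def IsMatching {I J : Type} (M : Finset (I × J)) : Prop :=
  ∀ e ∈ M, ∀ e' ∈ M, e ≠ e' → e.1 ≠ e'.1 ∧ e.2 ≠ e'.2

instance {I J : Type} [DecidableEq I] [DecidableEq J] (M : Finset (I × J)) :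
    Decidable (IsMatching M) := by unfold IsMatching; infer_instance

/-- Maximum total weight of a matching in the induced bipartite subgraph on `A` and `B`. -/
def OPT {I J : Type} [DecidableEq I] [DecidableEq J] (w : I × J → ℝ)
    (A : Finset I) (B : Finset J) : ℝ :=
  ((A ×ˢ B).powerset.filter (fun M => IsMatching M)).sup'
    ⟨∅, Finset.mem_filter.mpr ⟨Finset.empty_mem_powerset _, fun e he => by simp at he⟩⟩ (fun M => ∑ e ∈ M, w e)

/-
The contributions of the bidders of `A` to a maximum-weight matching of `(A, B)` add up to
`OPT(A, B)`, so the left-hand side is `E[OPT(I_{t+1}, J_s)] / (t + 1)`. Restricting a fixed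
optimal matching `M₀` of `(I, J)` to `I_{t+1} × J_s` gives a matching of `(I_{t+1}, J_s)`, and
each edge of `M₀` survives with probability `(t + 1)/n · s/m`; hence
`E[OPT(I_{t+1}, J_s)] ≥ (t + 1)/n · s/m · OPT(I, J)`.
-/

open Finset

theorem Finset.card_filter_mem_powersetCard_mul_card {α : Type*} [DecidableEq α] {s : Finset α}
    {x : α} (hx : x ∈ s) (k : ℕ) :
    #{A ∈ s.powersetCard k | x ∈ A} * #s = k * (#s).choose k := by
  cases k with
  | zero => simp
  | succ k =>
    obtain ⟨N, hN⟩ := Nat.exists_eq_succ_of_ne_zero (card_ne_zero_of_mem hx)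
    have hcount := card_filter_powersetCard_subset {x} s (k + 1) (by simpa) (by simp)
    simp only [singleton_subset_iff, card_singleton] at hcount
    rw [hcount, hN, Nat.add_sub_cancel, Nat.succ_sub_one, mul_comm, mul_comm (k + 1)]
    exact Nat.add_one_mul_choose_eq N k

theorem IsMatching.filter {I J : Type} {M : Finset (I × J)} (hM : IsMatching M)
    (p : I × J → Prop) [DecidablePred p] : IsMatching (M.filter p) :=
  fun e he e' he' hne => hM e (mem_of_mem_filter e he) e' (mem_of_mem_filter e' he') hne

theorem sum_le_OPT {I J : Type} [DecidableEq I] [DecidableEq J] (w : I × J → ℝ)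
    {A : Finset I} {B : Finset J} {M : Finset (I × J)} (hM : IsMatching M) (hMAB : M ⊆ A ×ˢ B) :
    ∑ e ∈ M, w e ≤ OPT w A B :=
  le_sup' (fun M => ∑ e ∈ M, w e) (mem_filter.2 ⟨mem_powerset.2 hMAB, hM⟩)

theorem sum_filter_mem_product_le_OPT {I J : Type} [DecidableEq I] [DecidableEq J]
    (w : I × J → ℝ) {M : Finset (I × J)} (hM : IsMatching M) (A : Finset I) (B : Finset J) :
    ∑ e ∈ M with e.1 ∈ A ∧ e.2 ∈ B, w e ≤ OPT w A B :=
  sum_le_OPT w (hM.filter _) fun _ he => mem_product.2 (mem_filter.1 he).2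

theorem card_mul_card_mul_sum_powersetCard_sum_filter_mem_product {I J : Type} [Fintype I]
    [Fintype J] [DecidableEq I] [DecidableEq J] (f : I × J → ℝ) (M : Finset (I × J)) (k l : ℕ) :
    (Fintype.card I * Fintype.card J : ℝ) *
        ∑ A ∈ univ.powersetCard k, ∑ B ∈ univ.powersetCard l, ∑ e ∈ M with e.1 ∈ A ∧ e.2 ∈ B, f e =
      (k * (Fintype.card I).choose k) * (l * (Fintype.card J).choose l) * ∑ e ∈ M, f e := by
  have hswap : ∑ A ∈ univ.powersetCard k, ∑ B ∈ univ.powersetCard l,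
      ∑ e ∈ M with e.1 ∈ A ∧ e.2 ∈ B, f e =
      ∑ e ∈ M, (#{A ∈ univ.powersetCard k | e.1 ∈ A} : ℝ) *
        #{B ∈ univ.powersetCard l | e.2 ∈ B} * f e := by
    have hsplit : ∀ (e : I × J) (A : Finset I) (B : Finset J),
        (if e.1 ∈ A ∧ e.2 ∈ B then f e else 0) =
          (if e.1 ∈ A then (1 : ℝ) else 0) * (if e.2 ∈ B then 1 else 0) * f e := by
      intro e A B
      rw [ite_zero_mul_ite_zero, one_mul, ite_mul, zero_mul, one_mul]
    simp_rw [sum_filter, hsplit]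
    rw [sum_congr rfl fun A _ => sum_comm, sum_comm]
    simp_rw [← sum_mul, ← sum_mul_sum, sum_boole]
  rw [hswap, mul_sum, mul_sum]
  refine sum_congr rfl fun e _ => ?_
  have hA : (#{A ∈ univ.powersetCard k | e.1 ∈ A} : ℝ) * Fintype.card I =
      k * (Fintype.card I).choose k := by
    rw [← card_univ]; exact_mod_cast card_filter_mem_powersetCard_mul_card (mem_univ e.1) k
  have hB : (#{B ∈ univ.powersetCard l | e.2 ∈ B} : ℝ) * Fintype.card J =
      l * (Fintype.card J).choose l := by
    rw [← card_univ]; exact_mod_cast card_filter_mem_powersetCard_mul_card (mem_univ e.2) l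
  linear_combination (Fintype.card J * #{B ∈ univ.powersetCard l | e.2 ∈ B} * f e) * hA +
    (k * (Fintype.card I).choose k * f e) * hB

theorem expected_bidder_contribution_general (I J : Type) [Fintype I] [Fintype J]
    [DecidableEq I] [DecidableEq J]
    (w : I × J → ℝ)
    (n m t s : ℕ) (hn : Fintype.card I = n) (hm : Fintype.card J = m)
    (hm1 : 1 ≤ m) (ht : t + 1 ≤ n) (hs : s ≤ m)
    (Mstar : Finset I → Finset J → Finset (I × J))
    (hMstar : ∀ A B, IsMatching (Mstar A B) ∧ Mstar A B ⊆ A ×ˢ B ∧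
      (∑ e ∈ Mstar A B, w e) = OPT w A B) :
    (∑ A ∈ Finset.univ.powersetCard (t + 1), ∑ B ∈ Finset.univ.powersetCard s,
        (∑ i ∈ A, ∑ e ∈ (Mstar A B).filter (fun e => e.1 = i), w e) / ((t : ℝ) + 1)) /
        ((n.choose (t + 1) : ℝ) * (m.choose s : ℝ)) ≥
      (1 / (n : ℝ)) * ((s : ℝ) / (m : ℝ)) * OPT w Finset.univ Finset.univ := by
  obtain ⟨hM₀, -, hM₀_sum⟩ := hMstar univ univ
  have hcontribution : ∀ A B, ∑ i ∈ A, ∑ e ∈ (Mstar A B).filter (fun e => e.1 = i), w e =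
      OPT w A B := fun A B =>
    (sum_fiberwise_of_maps_to (fun e he => (mem_product.1 ((hMstar A B).2.1 he)).1) w).trans
      (hMstar A B).2.2
  have hcount := card_mul_card_mul_sum_powersetCard_sum_filter_mem_product w
    (Mstar univ univ) (t + 1) s
  rw [hn, hm, hM₀_sum] at hcount
  have hn0 : (0 : ℝ) < n := by exact_mod_cast (by omega : 0 < n)
  have hm0 : (0 : ℝ) < m := by exact_mod_cast hm1
  have hCn : (0 : ℝ) < n.choose (t + 1) := by exact_mod_cast Nat.choose_pos ht
  have hCm : (0 : ℝ) < m.choose s := by exact_mod_cast Nat.choose_pos hs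
  rw [ge_iff_le]
  calc (1 / (n : ℝ)) * ((s : ℝ) / (m : ℝ)) * OPT w univ univ
      = (∑ A ∈ univ.powersetCard (t + 1), ∑ B ∈ univ.powersetCard s,
          ∑ e ∈ Mstar univ univ with e.1 ∈ A ∧ e.2 ∈ B, w e) /
          (((t : ℝ) + 1) * n.choose (t + 1) * m.choose s) := by
        field_simp
        push_cast at hcount
        linear_combination -hcount
    _ ≤ (∑ A ∈ univ.powersetCard (t + 1), ∑ B ∈ univ.powersetCard s, OPT w A B) /
          (((t : ℝ) + 1) * n.choose (t + 1) * m.choose s) := by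
        gcongr with A _ B _
        exact sum_filter_mem_product_le_OPT w hM₀ A B
    _ = _ := by
        simp_rw [hcontribution, ← sum_div, div_div, mul_assoc]

/-- If `I_{t+1}` is a uniformly random `(t+1)`-subset of `I`, `J_s` an independently chosen
uniformly random `s`-subset of `J`, and `i` a uniformly random element of `I_{t+1}`, then the
expected weight contributed by `i` in a fixed maximum-weight matching `Mstar I_{t+1} J_s` is
at least `(1/n)·(s/m)·OPT(I, J)`. -/
theorem expected_bidder_contribution (I J : Type) [Fintype I] [Fintype J]
    [DecidableEq I] [DecidableEq J]
    (w : I × J → ℝ) (hw : ∀ e, 0 ≤ w e)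
    (n m t s : ℕ) (hn : Fintype.card I = n) (hm : Fintype.card J = m)
    (hn1 : 1 ≤ n) (hm1 : 1 ≤ m) (ht : t + 1 ≤ n) (hs : s ≤ m)
    (Mstar : Finset I → Finset J → Finset (I × J))
    (hMstar : ∀ A B, IsMatching (Mstar A B) ∧ Mstar A B ⊆ A ×ˢ B ∧
      (∑ e ∈ Mstar A B, w e) = OPT w A B) :
    (∑ A ∈ Finset.univ.powersetCard (t + 1), ∑ B ∈ Finset.univ.powersetCard s,
        (∑ i ∈ A, ∑ e ∈ (Mstar A B).filter (fun e => e.1 = i), w e) / ((t : ℝ) + 1)) /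
        ((n.choose (t + 1) : ℝ) * (m.choose s : ℝ)) ≥
      (1 / (n : ℝ)) * ((s : ℝ) / (m : ℝ)) * OPT w Finset.univ Finset.univ :=
  expected_bidder_contribution_general I J w n m t s hn hm hm1 ht hs Mstar hMstar
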